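/- If a family of complex numbers (a_m)_{m ∈ ℤ} and a fixed γ ∈ ℤ satisfy 2(m−n)·a_{m+n} = (m+γ−n)·a_m + (m−n−γ)·a_n for all m, n ∈ ℤ, then a_m = a_0 for all m ∈ ℤ. -/

import Mathlib

/-!
Taking `n = 0` gives `(m - γ) a_m = (m - γ) a_0`, so `a_m = a_0` for every `m ≠ γ`. For `m = γ`
split `γ = (γ - k) + k` with `k > |γ|`: neither summand is `γ` and `γ - 2k ≠ 0`, so the
relation at `(γ - k, k)` reads `2 (γ - 2k) a_γ = 2 (γ - 2k) a_0`.
-/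

section

variable {K : Type*} [Field K] [CharZero K] {a : ℤ → K} {γ : ℤ}

theorem half_derivation_coeff_eq_of_ne
    (h : ∀ m n : ℤ, 2 * ((m - n : ℤ) : K) * a (m + n)
        = ((m + γ - n : ℤ) : K) * a m + ((m - n - γ : ℤ) : K) * a n)
    {m : ℤ} (hm : m ≠ γ) : a m = a 0 := by
  have hc : ((m - γ : ℤ) : K) ≠ 0 := Int.cast_ne_zero.mpr (sub_ne_zero.mpr hm)
  refine mul_left_cancel₀ hc ?_
  have h0 := h m 0
  push_cast at h0 ⊢
  simp only [add_zero] at h0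
  linear_combination h0

theorem half_derivation_coeff_self_eq
    (h : ∀ m n : ℤ, 2 * ((m - n : ℤ) : K) * a (m + n)
        = ((m + γ - n : ℤ) : K) * a m + ((m - n - γ : ℤ) : K) * a n) :
    a γ = a 0 := by
  obtain ⟨k, hk⟩ : ∃ k, |γ| < k := ⟨|γ| + 1, lt_add_one _⟩
  obtain ⟨hγ_lower, hγ_upper⟩ := abs_lt.mp hk
  have hγk : γ - k ≠ γ := by omega
  have hkγ : k ≠ γ := by omega
  have hc : ((γ - 2 * k : ℤ) : K) ≠ 0 := Int.cast_ne_zero.mpr (by omega)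
  have hrel := h (γ - k) k
  rw [sub_add_cancel, half_derivation_coeff_eq_of_ne h hγk,
    half_derivation_coeff_eq_of_ne h hkγ] at hrel
  refine mul_left_cancel₀ hc ?_
  push_cast at hrel ⊢
  linear_combination hrel / 2

end

theorem half_derivation_coeff_L
    (a : ℤ → ℂ) (γ : ℤ)
    (h : ∀ m n : ℤ, 2 * ((m - n : ℤ) : ℂ) * a (m + n)
        = ((m + γ - n : ℤ) : ℂ) * a m + ((m - n - γ : ℤ) : ℂ) * a n) :
    ∀ m : ℤ, a m = a 0 := by
  intro m
  rcases eq_or_ne m γ with rfl | hm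
  · exact half_derivation_coeff_self_eq h
  · exact half_derivation_coeff_eq_of_ne h hm
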